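/- Let (σ̄,τ̄) be a persistence pair of cone simplices in the cone filtration with max σ = d > b = max τ (low R[τ̄] = σ̄). Let z = ∂(V[τ̄] ∩ (K̄ − K)) ∩ K be the base-space part of the boundary of the cone simplices in column V[τ̄]. Then z is supported on K_{≥b}, ∂z is supported on K_{≥d} (hence z is a relative cycle of the pair K[b,d) = (K_{≥b}, K_{≥d}) with [z] ∈ H(K[b,d))), and moreover τ has nonzero coefficient in z and σ has nonzero coefficient in ∂z. -/
import Mathlib


open Finsupp
open scoped Classical

/-- A finite Δ-complex over a field `F`: each cell has a dimension, a boundary chain,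
and an integer support interval `T(σ) = [tmin σ, tmax σ] ⊆ [0, n]`; whenever `σ` appears
in `∂τ` one has `tmin σ < tmin τ < tmax τ < tmax σ`. -/
structure DeltaComplex (F : Type) [Field F] (n : ℤ) where
  Cell : Type
  deq : DecidableEq Cell
  fin : Fintype Cell
  dim : Cell → ℕ
  tmin : Cell → ℤ
  tmax : Cell → ℤ
  bdry : Cell → (Cell →₀ F)
  tmin_nonneg : ∀ σ, 0 ≤ tmin σ
  tmin_lt_tmax : ∀ σ, tmin σ < tmax σ
  tmax_le : ∀ σ, tmax σ ≤ n
  bdry_dim : ∀ τ σ, bdry τ σ ≠ 0 → dim σ + 1 = dim τ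
  nest : ∀ τ σ, bdry τ σ ≠ 0 → tmin σ < tmin τ ∧ tmax τ < tmax σ
  bdry_bdry : ∀ τ, ((bdry τ).sum fun σ a => a • bdry σ) = 0

attribute [instance] DeltaComplex.deq DeltaComplex.fin

variable {F : Type} [Field F] {n : ℤ}

/-- The boundary of a chain of `K`. -/
noncomputable def bd (K : DeltaComplex F n) (c : K.Cell →₀ F) : K.Cell →₀ F :=
  c.sum fun τ a => a • K.bdry τ

/-- A chain is supported on a set of cells. -/
def SuppOn {α β : Type} [Zero β] (c : α →₀ β) (S : α → Prop) : Prop :=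
  ∀ x, c x ≠ 0 → S x

/-- Cells of the prism `K̂`: vertical cells `σ×{i}` and horizontal cells `σ×[i,i+1]`. -/
inductive PCell (C : Type) where
  | vert : C → ℤ → PCell C
  | horiz : C → ℤ → PCell C
deriving DecidableEq

/-- Membership of a prism cell in the prism `K̂`. -/
def inPrism (K : DeltaComplex F n) : PCell K.Cell → Prop
  | .vert σ i => K.tmin σ ≤ i ∧ i ≤ K.tmax σ
  | .horiz σ i => K.tmin σ ≤ i ∧ i + 1 ≤ K.tmax σ

/-- Membership of a prism cell in the interlevel subcomplex `K̂_i^j` (cells `σ×T` with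
`T ⊆ [i,j]`). -/
def inSub (K : DeltaComplex F n) (i j : ℤ) : PCell K.Cell → Prop
  | .vert σ t => (K.tmin σ ≤ t ∧ t ≤ K.tmax σ) ∧ i ≤ t ∧ t ≤ j
  | .horiz σ t => (K.tmin σ ≤ t ∧ t + 1 ≤ K.tmax σ) ∧ i ≤ t ∧ t + 1 ≤ j

/-- The boundary of a single prism cell: `∂(τ×i) = (∂τ)×i` and
`∂(σ×[i,i+1]) = σ×(i+1) − σ×i − (∂σ)×[i,i+1]`. -/
noncomputable def pcellBd (K : DeltaComplex F n) : PCell K.Cell → (PCell K.Cell →₀ F)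
  | .vert τ i => (K.bdry τ).sum fun σ a => Finsupp.single (PCell.vert σ i) a
  | .horiz σ i =>
      Finsupp.single (PCell.vert σ (i + 1)) 1 - Finsupp.single (PCell.vert σ i) 1
        - (K.bdry σ).sum fun ρ a => Finsupp.single (PCell.horiz ρ i) a

/-- The boundary of a prism chain. -/
noncomputable def pbd (K : DeltaComplex F n) (c : PCell K.Cell →₀ F) : PCell K.Cell →₀ F :=
  c.sum fun x a => a • pcellBd K x

/-- `z` is a relative cycle of the pair of subcomplexes `(A, B)` of the prism. -/
def RelCycle (K : DeltaComplex F n) (A B : PCell K.Cell → Prop)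
    (z : PCell K.Cell →₀ F) : Prop :=
  SuppOn z A ∧ SuppOn (pbd K z) B

/-- The homology class `[z] ∈ H(A,B)` lies in the image of the map
`H(A',B') → H(A,B)` induced by the inclusion of pairs `(A',B') ⊆ (A,B)`:
there is a relative cycle `α` of `(A',B')` homologous to `z` within `(A,B)`. -/
def InImg (K : DeltaComplex F n) (A' B' A B : PCell K.Cell → Prop)
    (z : PCell K.Cell →₀ F) : Prop :=
  ∃ α β γ : PCell K.Cell →₀ F,
    RelCycle K A' B' α ∧ SuppOn β A ∧ SuppOn γ B ∧ z = α + pbd K β + γ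

/-- The vertical prism chain `w × t`. -/
noncomputable def vchain (K : DeltaComplex F n) (w : K.Cell →₀ F) (t : ℤ) :
    PCell K.Cell →₀ F :=
  w.sum fun σ a => Finsupp.single (PCell.vert σ t) a

/-- A valid choice of times for Lift-Cycle: for every simplex `τ` of `z` with
`T(τ) ∩ [b,d] ≠ ∅`, the chosen time satisfies `t τ ∈ T(τ) ∩ [b,d]`. -/
def ValidTimes (K : DeltaComplex F n) (z : K.Cell →₀ F) (b d : ℤ) (t : K.Cell → ℤ) : Prop :=
  ∀ τ, z τ ≠ 0 → K.tmin τ ≤ d → b ≤ K.tmax τ →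
    K.tmin τ ≤ t τ ∧ t τ ≤ K.tmax τ ∧ b ≤ t τ ∧ t τ ≤ d

/-- The chain `ẑ` produced by `Lift-Cycle(z, (s,f), w₀)` with the choice of times `t`
(here `b = min s f`, `d = max s f`): the sum of the vertical cells `⟨τ,z⟩·(τ×t_τ)` over
simplices `τ` of `z` with `T(τ) ∩ [b,d] ≠ ∅`, plus horizontal cells `σ×[k,k+1]`
(oriented from `s` to `f`) whose coefficient is the running sum
`⟨σ,w₀⟩ + Σ ⟨τ,z⟩·⟨σ,∂τ⟩` over the cofaces `τ` whose time `t_τ` has already been passed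
when traversing from `s` to `f`. -/
noncomputable def liftCycle (K : DeltaComplex F n) (z : K.Cell →₀ F) (s f : ℤ)
    (w0 : K.Cell →₀ F) (t : K.Cell → ℤ) : PCell K.Cell →₀ F :=
  (∑ τ ∈ z.support.filter (fun τ => K.tmin τ ≤ max s f ∧ min s f ≤ K.tmax τ),
      Finsupp.single (PCell.vert τ (t τ)) (z τ))
  + ∑ σ : K.Cell, ∑ k ∈ Finset.Icc (min s f) (max s f - 1),
      Finsupp.single (PCell.horiz σ k)
        ((if s ≤ f then (1 : F) else -1) *
          (w0 σ +
            ∑ τ ∈ z.support.filter (fun τ =>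
                (K.tmin τ ≤ max s f ∧ min s f ≤ K.tmax τ) ∧
                  (if s ≤ f then t τ ≤ k else k + 1 ≤ t τ)),
              z τ * (K.bdry τ) σ))

/-- Cells of the cone `K̄ = ω ∗ K`: base simplices, the cone vertex `ω`,
and cone simplices `σ̄ = ω ∗ σ`. -/
inductive CCell (C : Type) where
  | base : C → CCell C
  | omega : CCell C
  | cone : C → CCell C
deriving DecidableEq

/-- Boundary of a single cell of the cone `K̄`:
`∂σ` for base simplices, `0` for `ω`, and `∂(ω∗σ) = σ − ω∗∂σ` (minus `ω` when `σ` is a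
vertex) for cone simplices. -/
noncomputable def ccellBd (K : DeltaComplex F n) : CCell K.Cell → (CCell K.Cell →₀ F)
  | .base σ => (K.bdry σ).sum fun ρ a => Finsupp.single (CCell.base ρ) a
  | .omega => 0
  | .cone σ =>
      Finsupp.single (CCell.base σ) 1
        - (K.bdry σ).sum (fun ρ a => Finsupp.single (CCell.cone ρ) a)
        - (if K.dim σ = 0 then Finsupp.single CCell.omega 1 else 0)

/-- The boundary of a chain of the cone `K̄`. -/
noncomputable def cbd (K : DeltaComplex F n) (c : CCell K.Cell →₀ F) : CCell K.Cell →₀ F :=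
  c.sum fun x a => a • ccellBd K x

/-- The restriction `c ∩ K` of a cone chain to the base simplices, as a chain in `K`. -/
noncomputable def basePart (K : DeltaComplex F n) (c : CCell K.Cell →₀ F) : K.Cell →₀ F :=
  c.sum fun x a =>
    match x with
    | .base σ => Finsupp.single σ a
    | .omega => 0
    | .cone _ => 0

/-- The restriction `c ∩ (K̄ − K)` of a cone chain to the cells not in the base. -/
noncomputable def conePart (K : DeltaComplex F n) (c : CCell K.Cell →₀ F) :
    CCell K.Cell →₀ F :=
  c.sum fun x a =>
    match x with
    | .base _ => 0
    | .omega => Finsupp.single CCell.omega a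
    | .cone ρ => Finsupp.single (CCell.cone ρ) a

/-- The order of the cells of `K̄` in the cone filtration: base simplices by increasing
`min σ`, then `ω`, then cone simplices by decreasing `max σ`, ties broken consistently
so that every prefix is a subcomplex. -/
structure ConeOrder (K : DeltaComplex F n) where
  pos : CCell K.Cell → ℕ
  inj : Function.Injective pos
  base_lt_base : ∀ σ τ : K.Cell, K.tmin σ < K.tmin τ → pos (.base σ) < pos (.base τ)
  base_lt_omega : ∀ σ : K.Cell, pos (.base σ) < pos .omega
  omega_lt_cone : ∀ σ : K.Cell, pos .omega < pos (.cone σ)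
  cone_lt_cone : ∀ σ τ : K.Cell, K.tmax τ < K.tmax σ → pos (.cone σ) < pos (.cone τ)
  faces_first : ∀ x y, (ccellBd K x) y ≠ 0 → pos y < pos x

/-- `σ` is the pivot (lowest nonzero entry) of the column (chain) `c`. -/
def IsLow (K : DeltaComplex F n) (O : ConeOrder K) (c : CCell K.Cell →₀ F)
    (σ : CCell K.Cell) : Prop :=
  c σ ≠ 0 ∧ ∀ ρ, c ρ ≠ 0 → O.pos ρ ≤ O.pos σ

/-- `R = DV` is a decomposition of the boundary matrix `D` of the cone filtration:
`V` is invertible upper-triangular and `R` is reduced (pivots of nonzero columns lie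
in pairwise distinct rows). -/
structure IsReduction (K : DeltaComplex F n) (O : ConeOrder K)
    (R V : CCell K.Cell → (CCell K.Cell →₀ F)) : Prop where
  rdv : ∀ τ, R τ = cbd K (V τ)
  upper : ∀ τ ρ, (V τ) ρ ≠ 0 → O.pos ρ ≤ O.pos τ
  diag : ∀ τ, (V τ) τ ≠ 0
  reduced : ∀ τ τ' σ, τ ≠ τ' → IsLow K O (R τ) σ → ¬ IsLow K O (R τ') σ

/-- One run of the lazy (standard left-to-right) reduction of the column of `τ`:
starting from a column `c` (with coefficient vector `v`), while the column is nonzero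
and its pivot collides with the pivot of an earlier (already reduced) column, subtract
the appropriate scalar multiple of that column. -/
inductive LazyReduces (K : DeltaComplex F n) (O : ConeOrder K)
    (R V : CCell K.Cell → (CCell K.Cell →₀ F)) (τ : CCell K.Cell) :
    (CCell K.Cell →₀ F) → (CCell K.Cell →₀ F) →
      (CCell K.Cell →₀ F) → (CCell K.Cell →₀ F) → Prop
  | done (c v : CCell K.Cell →₀ F)
      (h : ∀ σ, IsLow K O c σ → ∀ τ', O.pos τ' < O.pos τ → ¬ IsLow K O (R τ') σ) :
      LazyReduces K O R V τ c v c v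
  | step (c v c' v' : CCell K.Cell →₀ F) (τ' σ : CCell K.Cell)
      (hlt : O.pos τ' < O.pos τ) (hc : IsLow K O c σ) (hr : IsLow K O (R τ') σ)
      (next : LazyReduces K O R V τ (c - (c σ / ((R τ') σ)) • R τ')
        (v - (c σ / ((R τ') σ)) • V τ') c' v') :
      LazyReduces K O R V τ c v c' v'

/-- `R = DV` is obtained by the lazy reduction: every column `R τ` (with coefficient
column `V τ`) is the result of the lazy reduction of the boundary column of `τ`,
columns being processed from left to right. -/
def IsLazyReduction (K : DeltaComplex F n) (O : ConeOrder K)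
    (R V : CCell K.Cell → (CCell K.Cell →₀ F)) : Prop :=
  ∀ τ, LazyReduces K O R V τ (ccellBd K τ) (Finsupp.single τ 1) (R τ) (V τ)

section Aux

variable {F : Type} [Field F] {n : ℤ}

private lemma sum_reindex_aux {α β M : Type} [AddCommMonoid M] [Fintype α]
    (g : α → β) (hg : Function.Injective g) (s : Finset β) (f : β → M)
    (h0 : ∀ x ∈ s, (∀ a, g a ≠ x) → f x = 0)
    (h1 : ∀ a, g a ∉ s → f (g a) = 0) :
    ∑ x ∈ s, f x = ∑ a : α, f (g a) := by
  classical
  have hs1 : ∑ x ∈ s, f x = ∑ x ∈ s ∪ Finset.univ.image g, f x := by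
    refine Finset.sum_subset (f := f) Finset.subset_union_left ?_
    intro x hx hxs
    rcases Finset.mem_union.mp hx with h | h
    · exact absurd h hxs
    · rcases Finset.mem_image.mp h with ⟨a, _, rfl⟩
      exact h1 a hxs
  have hs2 : ∑ x ∈ Finset.univ.image g, f x = ∑ x ∈ s ∪ Finset.univ.image g, f x := by
    refine Finset.sum_subset (f := f) Finset.subset_union_right ?_
    intro x hx hxi
    rcases Finset.mem_union.mp hx with h | h
    · refine h0 x h ?_
      intro a ha
      exact hxi (Finset.mem_image.mpr ⟨a, Finset.mem_univ a, ha⟩)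
    · exact absurd h hxi
  rw [hs1, ← hs2, Finset.sum_image (fun a _ b _ h => hg h)]

private lemma cbd_apply (K : DeltaComplex F n) (c : CCell K.Cell →₀ F) (y : CCell K.Cell) :
    cbd K c y = ∑ x ∈ c.support, c x * ccellBd K x y := by
  unfold cbd
  rw [Finsupp.sum_apply, Finsupp.sum]
  exact Finset.sum_congr rfl fun x _ => by simp

private lemma bd_apply (K : DeltaComplex F n) (z : K.Cell →₀ F) (μ : K.Cell) :
    bd K z μ = ∑ ρ : K.Cell, z ρ * K.bdry ρ μ := by
  unfold bd
  rw [Finsupp.sum_apply, Finsupp.sum]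
  refine Eq.trans (Finset.sum_congr rfl fun x _ => by simp)
    (Finset.sum_subset (Finset.subset_univ z.support) ?_)
  intro x _ hx
  rw [Finsupp.notMem_support_iff.mp hx, zero_mul]

private lemma sum_single_comp_apply {α γ : Type} [DecidableEq α] [DecidableEq γ]
    (w : α →₀ F) (g : α → γ) (hg : Function.Injective g) (μ : α) :
    (w.sum fun ρ a => Finsupp.single (g ρ) a) (g μ) = w μ := by
  rw [Finsupp.sum_apply, Finsupp.sum]
  have key : ∑ ρ ∈ w.support, (if ρ = μ then w ρ else 0) = w μ := by
    rw [Finset.sum_ite_eq' w.support μ]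
    split
    · rfl
    · exact (Finsupp.notMem_support_iff.mp (by assumption)).symm
  refine Eq.trans (Finset.sum_congr rfl ?_) key
  intro ρ _
  rw [Finsupp.single_apply]
  by_cases h : ρ = μ
  · simp [h]
  · rw [if_neg (fun hgh => h (hg hgh)), if_neg h]

private lemma sum_single_comp_apply_ne {α γ : Type} [DecidableEq γ]
    (w : α →₀ F) (g : α → γ) (y : γ) (hy : ∀ ρ, g ρ ≠ y) :
    (w.sum fun ρ a => Finsupp.single (g ρ) a) y = 0 := by
  rw [Finsupp.sum_apply, Finsupp.sum]
  refine Finset.sum_eq_zero fun ρ _ => ?_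
  rw [Finsupp.single_apply, if_neg (hy ρ)]

private lemma ccellBd_cone_base (K : DeltaComplex F n) (μ ρ : K.Cell) :
    ccellBd K (CCell.cone μ) (CCell.base ρ) = if μ = ρ then 1 else 0 := by
  unfold ccellBd
  rw [Finsupp.sub_apply, Finsupp.sub_apply,
    sum_single_comp_apply_ne (K.bdry μ) CCell.cone (CCell.base ρ) (fun _ => by simp),
    Finsupp.single_apply]
  have h2 : ((if K.dim μ = 0 then Finsupp.single CCell.omega 1 else 0) :
      CCell K.Cell →₀ F) (CCell.base ρ) = 0 := by
    split <;> simp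
  rw [h2]
  by_cases h : μ = ρ
  · simp [h]
  · rw [if_neg (by simpa using h), if_neg h]
    ring

private lemma ccellBd_cone_cone (K : DeltaComplex F n) (ρ μ : K.Cell) :
    ccellBd K (CCell.cone ρ) (CCell.cone μ) = -(K.bdry ρ μ) := by
  unfold ccellBd
  rw [Finsupp.sub_apply, Finsupp.sub_apply,
    sum_single_comp_apply (K.bdry ρ) CCell.cone (fun a b h => by injection h) μ,
    Finsupp.single_apply]
  have h2 : ((if K.dim ρ = 0 then Finsupp.single CCell.omega 1 else 0) :
      CCell K.Cell →₀ F) (CCell.cone μ) = 0 := by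
    split <;> simp
  rw [h2, if_neg (by simp)]
  ring

private lemma ccellBd_base_cone (K : DeltaComplex F n) (σ : K.Cell) (μ : K.Cell) :
    ccellBd K (CCell.base σ) (CCell.cone μ) = 0 := by
  unfold ccellBd
  exact sum_single_comp_apply_ne (K.bdry σ) CCell.base (CCell.cone μ) (fun _ => by simp)

private lemma conePart_apply_cone (K : DeltaComplex F n) (c : CCell K.Cell →₀ F)
    (ρ : K.Cell) : conePart K c (CCell.cone ρ) = c (CCell.cone ρ) := by
  classical
  unfold conePart
  rw [Finsupp.sum_apply, Finsupp.sum]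
  have key : ∑ x ∈ c.support, (if x = CCell.cone ρ then c x else 0) = c (CCell.cone ρ) := by
    rw [Finset.sum_ite_eq' c.support (CCell.cone ρ)]
    split
    · rfl
    · exact (Finsupp.notMem_support_iff.mp (by assumption)).symm
  refine Eq.trans (Finset.sum_congr rfl ?_) key
  intro x _
  cases x with
  | base σ => simp
  | omega => simp
  | cone μ =>
      show (Finsupp.single (CCell.cone μ) (c (CCell.cone μ))) (CCell.cone ρ) = _
      rw [Finsupp.single_apply]

private lemma conePart_apply_base (K : DeltaComplex F n) (c : CCell K.Cell →₀ F)
    (σ : K.Cell) : conePart K c (CCell.base σ) = 0 := by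
  classical
  unfold conePart
  rw [Finsupp.sum_apply, Finsupp.sum]
  refine Finset.sum_eq_zero fun x _ => ?_
  cases x with
  | base σ' => simp
  | omega =>
      show (Finsupp.single CCell.omega (c CCell.omega)) (CCell.base σ) = 0
      simp
  | cone μ =>
      show (Finsupp.single (CCell.cone μ) (c (CCell.cone μ))) (CCell.base σ) = 0
      simp

private lemma basePart_apply (K : DeltaComplex F n) (c : CCell K.Cell →₀ F) (ρ : K.Cell) :
    basePart K c ρ = c (CCell.base ρ) := by
  classical
  unfold basePart
  rw [Finsupp.sum_apply, Finsupp.sum]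
  have key : ∑ x ∈ c.support, (if x = CCell.base ρ then c x else 0) = c (CCell.base ρ) := by
    rw [Finset.sum_ite_eq' c.support (CCell.base ρ)]
    split
    · rfl
    · exact (Finsupp.notMem_support_iff.mp (by assumption)).symm
  refine Eq.trans (Finset.sum_congr rfl ?_) key
  intro x _
  cases x with
  | base σ =>
      show (Finsupp.single σ (c (CCell.base σ))) ρ = _
      rw [Finsupp.single_apply]
      by_cases h : σ = ρ <;> simp [h]
  | omega => simp
  | cone μ => simp

/-- The base part of the boundary of the cone part: `z ρ = v (cone ρ)`. -/
private lemma z_apply (K : DeltaComplex F n) (v : CCell K.Cell →₀ F) (ρ : K.Cell) :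
    basePart K (cbd K (conePart K v)) ρ = v (CCell.cone ρ) := by
  classical
  rw [basePart_apply, cbd_apply]
  have key : ∑ x ∈ (conePart K v).support,
      (if x = CCell.cone ρ then conePart K v x else 0) = v (CCell.cone ρ) := by
    rw [Finset.sum_ite_eq' _ (CCell.cone ρ)]
    split
    · exact conePart_apply_cone K v ρ
    · rw [← conePart_apply_cone K v ρ]
      exact (Finsupp.notMem_support_iff.mp (by assumption)).symm
  refine Eq.trans (Finset.sum_congr rfl ?_) key
  intro x hx
  cases x with
  | base σ => rw [conePart_apply_base]; simp
  | omega => show _ * ((0 : CCell K.Cell →₀ F)) _ = _; simp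
  | cone μ =>
      rw [ccellBd_cone_base]
      by_cases h : μ = ρ <;> simp [h]

private lemma cbd_apply_cone (K : DeltaComplex F n) (c : CCell K.Cell →₀ F) (μ : K.Cell) :
    cbd K c (CCell.cone μ) = -∑ ρ : K.Cell, c (CCell.cone ρ) * K.bdry ρ μ := by
  classical
  rw [cbd_apply]
  rw [sum_reindex_aux (CCell.cone : K.Cell → CCell K.Cell)
    (fun a b h => by injection h) c.support
    (fun x => c x * ccellBd K x (CCell.cone μ)) ?_ ?_]
  · rw [← Finset.sum_neg_distrib]
    refine Finset.sum_congr rfl fun ρ _ => ?_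
    rw [ccellBd_cone_cone]
    ring
  · intro x hx hne
    cases x with
    | base σ =>
        show c (CCell.base σ) * ccellBd K (CCell.base σ) (CCell.cone μ) = 0
        rw [ccellBd_base_cone, mul_zero]
    | omega => show _ * ((0 : CCell K.Cell →₀ F)) _ = _; simp
    | cone ρ => exact absurd rfl (hne ρ)
  · intro a ha
    show c (CCell.cone a) * ccellBd K (CCell.cone a) (CCell.cone μ) = 0
    rw [Finsupp.notMem_support_iff.mp ha, zero_mul]

end Aux
/-- Claim (relative pair structure): let `(σ̄,τ̄)` be a persistence pair of cone simplices
in the cone filtration with `max σ = d > b = max τ` (`low R[τ̄] = σ̄`), and let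
`z = ∂(V[τ̄] ∩ (K̄ − K)) ∩ K`. Then `z` is supported on `K_{≥b}`, `∂z` is supported on
`K_{≥d}` (so `z` is a relative cycle of the pair `K[b,d) = (K_{≥b}, K_{≥d})`), `τ` has
nonzero coefficient in `z`, and `σ` has nonzero coefficient in `∂z`. -/
theorem statement_14 {F : Type} [Field F] {n : ℤ} (K : DeltaComplex F n) (O : ConeOrder K)
    (R V : CCell K.Cell → (CCell K.Cell →₀ F)) (hRV : IsReduction K O R V)
    (σ τ : K.Cell) (b d : ℤ) (hd : K.tmax σ = d) (hb : K.tmax τ = b) (hbd : b < d)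
    (hlow : IsLow K O (R (CCell.cone τ)) (CCell.cone σ)) :
    SuppOn (basePart K (cbd K (conePart K (V (CCell.cone τ)))))
        (fun ρ => b ≤ K.tmax ρ)
    ∧ SuppOn (bd K (basePart K (cbd K (conePart K (V (CCell.cone τ))))))
        (fun ρ => d ≤ K.tmax ρ)
    ∧ (basePart K (cbd K (conePart K (V (CCell.cone τ))))) τ ≠ 0
    ∧ (bd K (basePart K (cbd K (conePart K (V (CCell.cone τ)))))) σ ≠ 0 := by
  have hR : ∀ μ : K.Cell,
      bd K (basePart K (cbd K (conePart K (V (CCell.cone τ))))) μ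
        = -(R (CCell.cone τ)) (CCell.cone μ) := by
    intro μ
    rw [bd_apply, hRV.rdv (CCell.cone τ), cbd_apply_cone, neg_neg]
    exact Finset.sum_congr rfl fun ρ _ => by rw [z_apply]
  refine ⟨?_, ?_, ?_, ?_⟩
  · intro ρ hρ
    rw [z_apply] at hρ
    have hpos := hRV.upper (CCell.cone τ) (CCell.cone ρ) hρ
    by_contra hlt
    push_neg at hlt
    have hlt' : K.tmax ρ < K.tmax τ := by rw [hb]; exact hlt
    exact absurd hpos (not_le.mpr (O.cone_lt_cone τ ρ hlt'))
  · intro μ hμ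
    rw [hR μ, neg_ne_zero] at hμ
    have hpos := hlow.2 (CCell.cone μ) hμ
    by_contra hlt
    push_neg at hlt
    have hlt' : K.tmax μ < K.tmax σ := by rw [hd]; exact hlt
    exact absurd hpos (not_le.mpr (O.cone_lt_cone σ μ hlt'))
  · rw [z_apply]
    exact hRV.diag (CCell.cone τ)
  · rw [hR σ, neg_ne_zero]
    exact hlow.1
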